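/- arXiv:1311.5056 — 5 statements merged into one kernel-verified Lean document; each statement's English description precedes it below -/
import Mathlib

section
/- Any two countable generic orientations of generic bipartite graphs are isomorphic (via an isomorphism preserving the bipartition). -/
/-! By back and forth it suffices to extend a finite partial isomorphism `R` by any vertex `v`.
For a new `v ∈ X`, genericity of `D₂` yields `w ∈ X` joined to the images of the out-, in- and
non-neighbours of `v` as `v` is to them; `w` must also avoid the finitely many `X`-vertices
already used, which two preliminary applications of genericity arrange. New vertices of `Y` are
handled by exchanging the sides, and the backward step by exchanging the digraphs. -/

/-- A 2-partite digraph `D = (X, Y, E)`: `X` and `Y` are disjoint sets covering the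
vertex set, every edge goes between the two sides, and no two opposite edges exist. -/
structure TwoPartiteDigraph (V : Type*) where
  X : Set V
  Y : Set V
  cover : X ∪ Y = Set.univ
  disj : Disjoint X Y
  E : V → V → Prop
  mem_of_edge : ∀ u v, E u v → (u ∈ X ∧ v ∈ Y) ∨ (u ∈ Y ∧ v ∈ X)
  not_opposite : ∀ u v, E u v → ¬ E v u

namespace TwoPartiteDigraph

variable {V V₁ V₂ : Type*}

/-- Out-neighbourhood (successors). -/
def Nplus (D : TwoPartiteDigraph V) (v : V) : Set V := {w | D.E v w}

/-- In-neighbourhood (predecessors). -/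
def Nminus (D : TwoPartiteDigraph V) (v : V) : Set V := {w | D.E w v}

/-- Adjacency in the underlying undirected bipartite graph. -/
def Adj (D : TwoPartiteDigraph V) (u v : V) : Prop := D.E u v ∨ D.E v u

/-- `v^⊥`: the vertices on the other side not adjacent to `v`. -/
def perp (D : TwoPartiteDigraph V) (v : V) : Set V :=
  {w | ((v ∈ D.X ∧ w ∈ D.Y) ∨ (v ∈ D.Y ∧ w ∈ D.X)) ∧ ¬ D.Adj v w}

/-- `D` is bipartite if all edges go from `X` to `Y`, or all from `Y` to `X`. -/
def Bipartite (D : TwoPartiteDigraph V) : Prop :=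
  (∀ u v, D.E u v → u ∈ D.X) ∨ (∀ u v, D.E u v → u ∈ D.Y)

/-- `φ` is an isomorphism between the subdigraphs induced on `A` and on `φ '' A`,
respecting the bipartition. -/
def IsPartialIso (D : TwoPartiteDigraph V) (A : Set V) (φ : V → V) : Prop :=
  Set.InjOn φ A ∧ (∀ a ∈ A, (a ∈ D.X ↔ φ a ∈ D.X)) ∧ (∀ a ∈ A, (a ∈ D.Y ↔ φ a ∈ D.Y)) ∧
  ∀ a ∈ A, ∀ b ∈ A, (D.E a b ↔ D.E (φ a) (φ b))

/-- A bipartition-preserving automorphism of `D`. -/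
def IsAuto (D : TwoPartiteDigraph V) (α : Equiv.Perm V) : Prop :=
  (∀ v, v ∈ D.X ↔ α v ∈ D.X) ∧ (∀ v, v ∈ D.Y ↔ α v ∈ D.Y) ∧
  ∀ u v, D.E u v ↔ D.E (α u) (α v)

/-- `D` is homogeneous: every isomorphism between finite induced subdigraphs respecting
the bipartition extends to a bipartition-preserving automorphism of `D`. -/
def Homogeneous (D : TwoPartiteDigraph V) : Prop :=
  ∀ A : Set V, A.Finite → ∀ φ : V → V, D.IsPartialIso A φ →
    ∃ α : Equiv.Perm V, D.IsAuto α ∧ ∀ a ∈ A, α a = φ a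

/-- The underlying undirected bipartite graph is complete bipartite. -/
def CompleteBip (D : TwoPartiteDigraph V) : Prop := ∀ x ∈ D.X, ∀ y ∈ D.Y, D.Adj x y

/-- `D` is a generic 2-partite digraph. -/
def IsGeneric (D : TwoPartiteDigraph V) : Prop :=
  D.CompleteBip ∧
  ∀ AX BX : Set V, AX.Finite → BX.Finite → AX ⊆ D.X → BX ⊆ D.X → Disjoint AX BX →
  ∀ AY BY : Set V, AY.Finite → BY.Finite → AY ⊆ D.Y → BY ⊆ D.Y → Disjoint AY BY →
    (∃ y ∈ D.Y, AX ⊆ D.Nplus y ∧ BX ⊆ D.Nminus y) ∧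
    (∃ x ∈ D.X, AY ⊆ D.Nplus x ∧ BY ⊆ D.Nminus x)

/-- `D` is a generic orientation of a generic bipartite graph. -/
def IsGenericOrientation (D : TwoPartiteDigraph V) : Prop :=
  ∀ AX BX CX : Set V, AX.Finite → BX.Finite → CX.Finite →
    AX ⊆ D.X → BX ⊆ D.X → CX ⊆ D.X →
    Disjoint AX BX → Disjoint AX CX → Disjoint BX CX →
  ∀ AY BY CY : Set V, AY.Finite → BY.Finite → CY.Finite →
    AY ⊆ D.Y → BY ⊆ D.Y → CY ⊆ D.Y →
    Disjoint AY BY → Disjoint AY CY → Disjoint BY CY →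
    (∃ y ∈ D.Y, AX ⊆ D.Nplus y ∧ BX ⊆ D.Nminus y ∧ CX ⊆ D.perp y) ∧
    (∃ x ∈ D.X, AY ⊆ D.Nplus x ∧ BY ⊆ D.Nminus x ∧ CY ⊆ D.perp x)

/-- `D` is (a copy of) `M_κ` with the matching oriented from `X` to `Y`:
there is a bijection `m : X → Y` such that the edges from `X` to `Y` form the
perfect matching `{(x, m x)}` and the edges from `Y` to `X` form its bipartite
complement. -/
def IsMFixed (D : TwoPartiteDigraph V) : Prop :=
  ∃ m : V → V, Set.BijOn m D.X D.Y ∧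
    (∀ x ∈ D.X, ∀ y ∈ D.Y, (D.E x y ↔ y = m x)) ∧
    (∀ x ∈ D.X, ∀ y ∈ D.Y, (D.E y x ↔ y ≠ m x))

/-- `D` is (a copy of) `M_κ`: one of the two directed parts is a perfect matching and
the other is the bipartite complement of a perfect matching. -/
def IsM (D : TwoPartiteDigraph V) : Prop :=
  ∃ m : V → V, Set.BijOn m D.X D.Y ∧
    ((∀ x ∈ D.X, ∀ y ∈ D.Y, (D.E x y ↔ y = m x) ∧ (D.E y x ↔ y ≠ m x)) ∨
     (∀ x ∈ D.X, ∀ y ∈ D.Y, (D.E y x ↔ y = m x) ∧ (D.E x y ↔ y ≠ m x)))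

/-- Isomorphism of 2-partite digraphs respecting the bipartitions. -/
def Isomorphic (D₁ : TwoPartiteDigraph V₁) (D₂ : TwoPartiteDigraph V₂) : Prop :=
  ∃ e : V₁ ≃ V₂, (∀ v, v ∈ D₁.X ↔ e v ∈ D₂.X) ∧ (∀ v, v ∈ D₁.Y ↔ e v ∈ D₂.Y) ∧
    ∀ u v, D₁.E u v ↔ D₂.E (e u) (e v)

/-- `φ` is an isomorphism of finite induced subgraphs of the underlying undirected
bipartite graph, respecting the bipartition. -/
def IsGraphPartialIso (D : TwoPartiteDigraph V) (A : Set V) (φ : V → V) : Prop :=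
  Set.InjOn φ A ∧ (∀ a ∈ A, (a ∈ D.X ↔ φ a ∈ D.X)) ∧ (∀ a ∈ A, (a ∈ D.Y ↔ φ a ∈ D.Y)) ∧
  ∀ a ∈ A, ∀ b ∈ A, (D.Adj a b ↔ D.Adj (φ a) (φ b))

/-- The underlying undirected bipartite graph of `D` is homogeneous. -/
def GraphHomogeneous (D : TwoPartiteDigraph V) : Prop :=
  ∀ A : Set V, A.Finite → ∀ φ : V → V, D.IsGraphPartialIso A φ →
    ∃ α : Equiv.Perm V, ((∀ v, v ∈ D.X ↔ α v ∈ D.X) ∧ (∀ v, v ∈ D.Y ↔ α v ∈ D.Y) ∧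
      ∀ u v, D.Adj u v ↔ D.Adj (α u) (α v)) ∧ ∀ a ∈ A, α a = φ a

/-- The underlying undirected bipartite graph of `D` is generic. -/
def UnderlyingGeneric (D : TwoPartiteDigraph V) : Prop :=
  ∀ UX VX : Set V, UX.Finite → VX.Finite → UX ⊆ D.X → VX ⊆ D.X → Disjoint UX VX →
  ∀ UY VY : Set V, UY.Finite → VY.Finite → UY ⊆ D.Y → VY ⊆ D.Y → Disjoint UY VY →
    (∃ y ∈ D.Y, (∀ u ∈ UX, D.Adj y u) ∧ ∀ v ∈ VX, ¬ D.Adj y v) ∧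
    (∃ x ∈ D.X, (∀ u ∈ UY, D.Adj x u) ∧ ∀ v ∈ VY, ¬ D.Adj x v)

end TwoPartiteDigraph

open TwoPartiteDigraph

section BackAndForth

variable {α β γ : Type*}

/-- Unlike `Set.Pairwise`, this also asks for `Q p p`. -/
def Coherent (Q : γ → γ → Prop) (R : Set γ) : Prop := ∀ p ∈ R, ∀ q ∈ R, Q p q

lemma coherent_empty (Q : γ → γ → Prop) : Coherent Q ∅ := by
  simp [Coherent]

lemma Coherent.insert {Q : γ → γ → Prop} {R : Set γ} {x : γ} (hR : Coherent Q R)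
    (hx : Q x x) (hxR : ∀ q ∈ R, Q x q ∧ Q q x) : Coherent Q (insert x R) := by
  rintro p (rfl | hp) q (rfl | hq)
  exacts [hx, (hxR q hq).1, (hxR p hp).2, hR p hp q hq]

lemma coherent_iUnion {ι : Sort*} {Q : γ → γ → Prop} {R : ι → Set γ}
    (hdir : Directed (· ⊆ ·) R) (h : ∀ i, Coherent Q (R i)) : Coherent Q (⋃ i, R i) := by
  intro p hp q hq
  obtain ⟨i, hi⟩ := Set.mem_iUnion.1 hp
  obtain ⟨j, hj⟩ := Set.mem_iUnion.1 hq
  obtain ⟨k, hik, hjk⟩ := hdir i j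
  exact h k p (hik hi) q (hjk hj)

lemma Coherent.exists_equiv {Q : α × β → α × β → Prop}
    (hQ : ∀ p q, Q p q → (p.1 = q.1 ↔ p.2 = q.2)) {R : Set (α × β)} (hR : Coherent Q R)
    (hdom : ∀ a, ∃ b, (a, b) ∈ R) (hcod : ∀ b, ∃ a, (a, b) ∈ R) :
    ∃ e : α ≃ β, ∀ a a', Q (a, e a) (a', e a') := by
  choose f hf using hdom
  have hQf : ∀ a a', Q (a, f a) (a', f a') := fun a a' => hR _ (hf a) _ (hf a')
  refine ⟨Equiv.ofBijective f ⟨fun a a' h => (hQ _ _ (hQf a a')).2 h, fun b => ?_⟩, hQf⟩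
  obtain ⟨a, ha⟩ := hcod b
  exact ⟨a, (hQ _ _ (hR _ (hf a) _ ha)).1 rfl⟩

variable {Q : α × β → α × β → Prop}
  (forth : ∀ R : Set (α × β), R.Finite → Coherent Q R → ∀ a, ∃ b, Coherent Q (insert (a, b) R))
  (back : ∀ R : Set (α × β), R.Finite → Coherent Q R → ∀ b, ∃ a, Coherent Q (insert (a, b) R))
include forth back

lemma exists_coherent_extension_of_backAndForth
    (R : {R : Set (α × β) // R.Finite ∧ Coherent Q R}) (a : α) (b : β) : ∃ R' : {R : Set (α × β) // R.Finite ∧ Coherent Q R},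
      R.1 ⊆ R'.1 ∧ (∃ b', (a, b') ∈ R'.1) ∧ ∃ a', (a', b) ∈ R'.1 := by
  obtain ⟨b', hb'⟩ := forth R.1 R.2.1 R.2.2 a
  obtain ⟨a', ha'⟩ := back _ (R.2.1.insert _) hb' b
  refine ⟨⟨_, (R.2.1.insert _).insert _, ha'⟩, fun p hp => ?_, ⟨b', ?_⟩, ⟨a', ?_⟩⟩ <;> simp_all

theorem exists_coherent_total_of_backAndForth [Countable α] [Countable β] :
    ∃ R : Set (α × β), Coherent Q R ∧ (∀ a, ∃ b, (a, b) ∈ R) ∧ ∀ b, ∃ a, (a, b) ∈ R := by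
  rcases isEmpty_or_nonempty α with hα | hα
  · exact ⟨∅, coherent_empty Q, isEmptyElim,
      fun b => isEmptyElim (back ∅ Set.finite_empty (coherent_empty Q) b).choose⟩
  rcases isEmpty_or_nonempty β with hβ | hβ
  · exact ⟨∅, coherent_empty Q,
      fun a => isEmptyElim (forth ∅ Set.finite_empty (coherent_empty Q) a).choose, isEmptyElim⟩
  obtain ⟨enumα, henumα⟩ := exists_surjective_nat α
  obtain ⟨enumβ, henumβ⟩ := exists_surjective_nat β
  choose next hnext using exists_coherent_extension_of_backAndForth forth back
  let chain : ℕ → {R : Set (α × β) // R.Finite ∧ Coherent Q R} := fun n =>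
    Nat.rec ⟨∅, Set.finite_empty, coherent_empty Q⟩ (fun n R => next R (enumα n) (enumβ n)) n
  have hchain : Monotone fun n => (chain n).1 :=
    monotone_nat_of_le_succ fun n => (hnext (chain n) (enumα n) (enumβ n)).1
  refine ⟨⋃ n, (chain n).1, coherent_iUnion hchain.directed_le fun n => (chain n).2.2,
    fun a => ?_, fun b => ?_⟩
  · obtain ⟨n, rfl⟩ := henumα a
    obtain ⟨b, hb⟩ := (hnext (chain n) (enumα n) (enumβ n)).2.1
    exact ⟨b, Set.mem_iUnion.2 ⟨n + 1, hb⟩⟩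
  · obtain ⟨n, rfl⟩ := henumβ b
    obtain ⟨a, ha⟩ := (hnext (chain n) (enumα n) (enumβ n)).2.2
    exact ⟨a, Set.mem_iUnion.2 ⟨n + 1, ha⟩⟩

theorem exists_equiv_of_backAndForth [Countable α] [Countable β]
    (hQ : ∀ p q, Q p q → (p.1 = q.1 ↔ p.2 = q.2)) :
    ∃ e : α ≃ β, ∀ a a', Q (a, e a) (a', e a') := by
  obtain ⟨R, hR, hdom, hcod⟩ := exists_coherent_total_of_backAndForth forth back
  exact hR.exists_equiv hQ hdom hcod

end BackAndForth

namespace TwoPartiteDigraph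

variable {V V₁ V₂ : Type*}

lemma mem_Y_iff_not_mem_X (D : TwoPartiteDigraph V) {v : V} : v ∈ D.Y ↔ v ∉ D.X := by
  have hv : v ∈ D.X ∪ D.Y := D.cover ▸ Set.mem_univ v
  exact ⟨fun hY hX => Set.disjoint_left.1 D.disj hX hY, hv.resolve_left⟩

lemma not_E_of_mem_X {D : TwoPartiteDigraph V} {u v : V} (hu : u ∈ D.X) (hv : v ∈ D.X) :
    ¬ D.E u v := by
  intro h
  rcases D.mem_of_edge u v h with ⟨-, hv'⟩ | ⟨hu', -⟩
  · exact D.mem_Y_iff_not_mem_X.1 hv' hv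
  · exact D.mem_Y_iff_not_mem_X.1 hu' hu

lemma mem_Y_of_E_of_mem_X {D : TwoPartiteDigraph V} {u v : V} (hu : u ∈ D.X)
    (h : D.E u v ∨ D.E v u) : v ∈ D.Y := by
  by_contra hv
  rw [mem_Y_iff_not_mem_X, not_not] at hv
  exact h.elim (not_E_of_mem_X hu hv) (not_E_of_mem_X hv hu)

def flip (D : TwoPartiteDigraph V) : TwoPartiteDigraph V where
  X := D.Y
  Y := D.X
  cover := Set.union_comm D.X D.Y ▸ D.cover
  disj := D.disj.symm
  E := D.E
  mem_of_edge u v h := (D.mem_of_edge u v h).symm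
  not_opposite := D.not_opposite

lemma flip_perp (D : TwoPartiteDigraph V) (v : V) : D.flip.perp v = D.perp v := by
  ext w
  simp only [perp, flip, Adj, Set.mem_ofPred_eq]
  tauto

lemma IsGenericOrientation.flip {D : TwoPartiteDigraph V} (h : D.IsGenericOrientation) :
    D.flip.IsGenericOrientation := by
  intro AX BX CX hAXf hBXf hCXf hAX hBX hCX hABX hACX hBCX AY BY CY hAYf hBYf hCYf hAY hBY hCY
    hABY hACY hBCY
  obtain ⟨⟨x, hx⟩, ⟨y, hy⟩⟩ := h AY BY CY hAYf hBYf hCYf hAY hBY hCY hABY hACY hBCY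
    AX BX CX hAXf hBXf hCXf hAX hBX hCX hABX hACX hBCX
  exact ⟨⟨y, by rwa [flip_perp]⟩, ⟨x, by rwa [flip_perp]⟩⟩

lemma IsGenericOrientation.exists_mem_X {D : TwoPartiteDigraph V} (h : D.IsGenericOrientation)
    {A B C : Set V} (hAf : A.Finite) (hBf : B.Finite) (hCf : C.Finite)
    (hA : A ⊆ D.Y) (hB : B ⊆ D.Y) (hC : C ⊆ D.Y)
    (hAB : Disjoint A B) (hAC : Disjoint A C) (hBC : Disjoint B C) :
    ∃ x ∈ D.X, A ⊆ D.Nplus x ∧ B ⊆ D.Nminus x ∧ C ⊆ D.perp x :=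
  (h ∅ ∅ ∅ Set.finite_empty Set.finite_empty Set.finite_empty (Set.empty_subset _)
    (Set.empty_subset _) (Set.empty_subset _) (Set.disjoint_empty _) (Set.disjoint_empty _)
    (Set.disjoint_empty _) A B C hAf hBf hCf hA hB hC hAB hAC hBC).2

lemma IsGenericOrientation.exists_mem_X_subset_Nplus {D : TwoPartiteDigraph V}
    (h : D.IsGenericOrientation) {A : Set V} (hAf : A.Finite) (hA : A ⊆ D.Y) :
    ∃ x ∈ D.X, A ⊆ D.Nplus x := by
  obtain ⟨x, hx, hAx, -⟩ := h.exists_mem_X hAf Set.finite_empty Set.finite_empty hA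
    (Set.empty_subset _) (Set.empty_subset _) (Set.disjoint_empty _) (Set.disjoint_empty _)
    (Set.disjoint_empty _)
  exact ⟨x, hx, hAx⟩

lemma IsGenericOrientation.exists_mem_Y_not_mem_subset_Nplus {D : TwoPartiteDigraph V}
    (h : D.IsGenericOrientation) {G F : Set V} (hGf : G.Finite) (hFf : F.Finite)
    (hG : G ⊆ D.Y) (hF : F ⊆ D.X) : ∃ y ∈ D.Y, y ∉ G ∧ F ⊆ D.Nplus y := by
  obtain ⟨x, hx, hGx⟩ := h.exists_mem_X_subset_Nplus hGf hG
  obtain ⟨y, hy, hxFy⟩ := h.flip.exists_mem_X_subset_Nplus (hFf.insert x) (Set.insert_subset hx hF)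
  -- `y → x` while `x → g` for every `g ∈ G`
  exact ⟨y, hy, fun hyG => D.not_opposite x y (hGx hyG) (hxFy (Set.mem_insert x F)),
    (Set.subset_insert x F).trans hxFy⟩

lemma IsGenericOrientation.exists_mem_X_not_mem {D : TwoPartiteDigraph V}
    (h : D.IsGenericOrientation) {A B C F : Set V} (hAf : A.Finite) (hBf : B.Finite)
    (hCf : C.Finite) (hFf : F.Finite) (hA : A ⊆ D.Y) (hB : B ⊆ D.Y) (hC : C ⊆ D.Y)
    (hF : F ⊆ D.X) (hAB : Disjoint A B) (hAC : Disjoint A C) (hBC : Disjoint B C) :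
    ∃ x ∈ D.X, x ∉ F ∧ A ⊆ D.Nplus x ∧ B ⊆ D.Nminus x ∧ C ⊆ D.perp x := by
  obtain ⟨y, hy, hyABC, hFy⟩ := h.exists_mem_Y_not_mem_subset_Nplus ((hAf.union hBf).union hCf)
    hFf (Set.union_subset (Set.union_subset hA hB) hC) hF
  obtain ⟨x, hx, hyAx, hBx, hCx⟩ := h.exists_mem_X (hAf.insert y) hBf hCf
    (Set.insert_subset hy hA) hB hC
    (Set.disjoint_insert_left.2 ⟨fun hyB => hyABC (by simp [hyB]), hAB⟩)
    (Set.disjoint_insert_left.2 ⟨fun hyC => hyABC (by simp [hyC]), hAC⟩) hBC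
  -- `x → y` while `y → f` for every `f ∈ F`
  exact ⟨x, hx, fun hxF => D.not_opposite y x (hFy hxF) (hyAx (Set.mem_insert y A)),
    (Set.subset_insert y A).trans hyAx, hBx, hCx⟩

end TwoPartiteDigraph

namespace TwoPartiteDigraph

variable {V₁ V₂ : Type*} {D₁ : TwoPartiteDigraph V₁} {D₂ : TwoPartiteDigraph V₂}

/-- The condition for the pairs `p` and `q` to lie together in the graph of a
bipartition-preserving isomorphism `D₁ ≃ D₂`. -/
def IsoCompat (D₁ : TwoPartiteDigraph V₁) (D₂ : TwoPartiteDigraph V₂) (p q : V₁ × V₂) : Prop :=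
  (p.1 ∈ D₁.X ↔ p.2 ∈ D₂.X) ∧ (p.1 = q.1 ↔ p.2 = q.2) ∧ (D₁.E p.1 q.1 ↔ D₂.E p.2 q.2)

lemma Coherent.image_swap {R : Set (V₁ × V₂)} (hR : Coherent (IsoCompat D₁ D₂) R) :
    Coherent (IsoCompat D₂ D₁) (Prod.swap '' R) := by
  rintro _ ⟨p, hp, rfl⟩ _ ⟨q, hq, rfl⟩
  obtain ⟨hX, hEq, hE⟩ := hR p hp q hq
  exact ⟨hX.symm, hEq.symm, hE.symm⟩

lemma coherent_isoCompat_flip_iff {R : Set (V₁ × V₂)} :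
    Coherent (IsoCompat D₁.flip D₂.flip) R ↔ Coherent (IsoCompat D₁ D₂) R := by
  have hY : ∀ {p : V₁ × V₂}, (p.1 ∈ D₁.Y ↔ p.2 ∈ D₂.Y) ↔ (p.1 ∈ D₁.X ↔ p.2 ∈ D₂.X) := by
    simp only [mem_Y_iff_not_mem_X, not_iff_not, implies_true]
  simp only [Coherent, IsoCompat]
  exact forall₂_congr fun p _ => forall₂_congr fun q _ => and_congr_left' hY

/-- Of the three mutually exclusive relations between two vertices (an edge one way, the
other way, or none), the pair `(w, b)` realises at least the one realised by `(u, a)`, hence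
exactly that one. -/
lemma E_iff_E_of_imp {u a : V₁} {w b : V₂} (hout : D₁.E u a → D₂.E w b)
    (hin : D₁.E a u → D₂.E b w) (hnon : ¬ D₁.Adj u a → ¬ D₂.Adj w b) :
    (D₁.E u a ↔ D₂.E w b) ∧ (D₁.E a u ↔ D₂.E b w) := by
  have hwb := D₂.not_opposite w b
  unfold Adj at hnon
  tauto

lemma exists_coherent_insert_of_mem_X (h₂ : D₂.IsGenericOrientation) {R : Set (V₁ × V₂)}
    (hRf : R.Finite) (hR : Coherent (IsoCompat D₁ D₂) R) {v : V₁} (hv : v ∈ D₁.X)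
    (hvR : v ∉ Prod.fst '' R) : ∃ w, Coherent (IsoCompat D₁ D₂) (insert (v, w) R) := by
  have hfin : ∀ P : V₁ × V₂ → Prop, (Prod.snd '' {p ∈ R | P p}).Finite :=
    fun P => (hRf.subset (Set.sep_subset R P)).image _
  have hsub : ∀ P : V₁ × V₂ → Prop, (∀ p, P p → p.1 ∈ D₁.Y) →
      Prod.snd '' {p ∈ R | P p} ⊆ D₂.Y := by
    rintro P hP _ ⟨p, ⟨hp, hPp⟩, rfl⟩
    rw [mem_Y_iff_not_mem_X, ← (hR p hp p hp).1, ← mem_Y_iff_not_mem_X]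
    exact hP p hPp
  have hdisj : ∀ P P' : V₁ × V₂ → Prop, (∀ p, P p → ¬ P' p) →
      Disjoint (Prod.snd '' {p ∈ R | P p}) (Prod.snd '' {p ∈ R | P' p}) := by
    refine fun P P' hPP' => Set.disjoint_left.2 ?_
    rintro _ ⟨p, ⟨hp, hPp⟩, rfl⟩ ⟨q, ⟨hq, hP'q⟩, hqp⟩
    obtain ⟨a, b⟩ := p
    obtain ⟨a', b'⟩ := q
    obtain rfl : a' = a := (hR _ hq _ hp).2.1.2 hqp
    obtain rfl : b' = b := hqp
    exact hPP' _ hPp hP'q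
  have hvY : ∀ a, D₁.E v a ∨ D₁.E a v → a ∈ D₁.Y := fun a => mem_Y_of_E_of_mem_X hv
  obtain ⟨w, hw, hwF, hwA, hwB, hwC⟩ := h₂.exists_mem_X_not_mem
    (hfin fun p => D₁.E v p.1) (hfin fun p => D₁.E p.1 v)
    (hfin fun p => p.1 ∈ D₁.Y ∧ ¬ D₁.Adj v p.1) (hfin fun p => p.1 ∈ D₁.X)
    (hsub _ fun p h => hvY p.1 (.inl h)) (hsub _ fun p h => hvY p.1 (.inr h))
    (hsub _ fun p h => h.1) (by rintro _ ⟨p, ⟨hp, hpX⟩, rfl⟩; exact (hR p hp p hp).1.1 hpX)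
    (hdisj _ _ fun p h h' => D₁.not_opposite _ _ h h')
    (hdisj _ _ fun p h h' => h'.2 (.inl h)) (hdisj _ _ fun p h h' => h'.2 (.inr h))
  refine ⟨w, hR.insert ⟨iff_of_true hv hw, iff_of_true rfl rfl,
    iff_of_false (not_E_of_mem_X hv hv) (not_E_of_mem_X hw hw)⟩ ?_⟩
  rintro ⟨a, b⟩ hab
  have hva : v ≠ a := fun h => hvR ⟨(a, b), hab, h.symm⟩
  have hwb : w ≠ b := by
    rintro rfl
    exact hwF ⟨(a, w), ⟨hab, (hR _ hab _ hab).1.2 hw⟩, rfl⟩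
  have hE : (D₁.E v a ↔ D₂.E w b) ∧ (D₁.E a v ↔ D₂.E b w) := by
    by_cases ha : a ∈ D₁.X
    · have hb : b ∈ D₂.X := (hR _ hab _ hab).1.1 ha
      exact ⟨iff_of_false (not_E_of_mem_X hv ha) (not_E_of_mem_X hw hb),
        iff_of_false (not_E_of_mem_X ha hv) (not_E_of_mem_X hb hw)⟩
    · refine E_iff_E_of_imp (fun h => hwA ⟨(a, b), ⟨hab, h⟩, rfl⟩)
        (fun h => hwB ⟨(a, b), ⟨hab, h⟩, rfl⟩) (fun h => (hwC ⟨(a, b), ⟨hab, ?_, h⟩, rfl⟩).2)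
      exact D₁.mem_Y_iff_not_mem_X.2 ha
  exact ⟨⟨iff_of_true hv hw, iff_of_false hva hwb, hE.1⟩,
    ⟨(hR _ hab _ hab).1, iff_of_false hva.symm hwb.symm, hE.2⟩⟩

lemma exists_coherent_insert_image (h₂ : D₂.IsGenericOrientation) {R : Set (V₁ × V₂)}
    (hRf : R.Finite) (hR : Coherent (IsoCompat D₁ D₂) R) (v : V₁) :
    ∃ w, Coherent (IsoCompat D₁ D₂) (insert (v, w) R) := by
  by_cases hvR : v ∈ Prod.fst '' R
  · obtain ⟨⟨_, w⟩, hp, rfl⟩ := hvR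
    exact ⟨w, by rwa [Set.insert_eq_of_mem hp]⟩
  by_cases hv : v ∈ D₁.X
  · exact exists_coherent_insert_of_mem_X h₂ hRf hR hv hvR
  · simp only [← coherent_isoCompat_flip_iff (D₁ := D₁)] at hR ⊢
    exact exists_coherent_insert_of_mem_X h₂.flip hRf hR (D₁.mem_Y_iff_not_mem_X.2 hv) hvR

lemma exists_coherent_insert_preimage (h₁ : D₁.IsGenericOrientation) {R : Set (V₁ × V₂)}
    (hRf : R.Finite) (hR : Coherent (IsoCompat D₁ D₂) R) (w : V₂) :
    ∃ v, Coherent (IsoCompat D₁ D₂) (insert (v, w) R) := by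
  obtain ⟨v, hv⟩ := exists_coherent_insert_image h₁ (hRf.image Prod.swap) hR.image_swap w
  refine ⟨v, ?_⟩
  simpa only [Set.image_insert_eq, Set.image_image, Prod.swap_swap, Set.image_id',
    Prod.swap_prod_mk] using hv.image_swap

end TwoPartiteDigraph

open TwoPartiteDigraph

/-- Any two countable generic orientations of generic bipartite graphs are isomorphic
via a bipartition-preserving isomorphism. -/
theorem stmt_4 {V₁ V₂ : Type*} [Countable V₁] [Countable V₂]
    (D₁ : TwoPartiteDigraph V₁) (D₂ : TwoPartiteDigraph V₂)
    (h₁ : D₁.IsGenericOrientation) (h₂ : D₂.IsGenericOrientation) :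
    Isomorphic D₁ D₂ := by
  obtain ⟨e, he⟩ := exists_equiv_of_backAndForth
    (fun R hRf hR v => exists_coherent_insert_image h₂ hRf hR v)
    (fun R hRf hR w => exists_coherent_insert_preimage h₁ hRf hR w) fun p q h => h.2.1
  refine ⟨e, fun v => (he v v).1, fun v => ?_, fun u v => (he u v).2.2⟩
  rw [mem_Y_iff_not_mem_X, mem_Y_iff_not_mem_X, (he v v).1]
end

section
/- The countable generic 2-partite digraph is homogeneous: every isomorphism between finite induced subdigraphs respecting the bipartition extends to an automorphism of the whole digraph respecting the bipartition. -/
open TwoPartiteDigraph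

section Helpers

namespace TwoPartiteDigraph

variable {V : Type*} (D : TwoPartiteDigraph V)

lemma no_self (v : V) : ¬ D.E v v := fun hE => by
  rcases D.mem_of_edge v v hE with ⟨h1, h2⟩ | ⟨h2, h1⟩ <;>
    exact Set.disjoint_left.mp D.disj h1 h2

lemma mem_or (v : V) : v ∈ D.X ∨ v ∈ D.Y := by
  have h := Set.mem_univ v
  rw [← D.cover] at h
  exact h

lemma not_memY {v : V} (hv : v ∈ D.X) : v ∉ D.Y := fun h2 => Set.disjoint_left.mp D.disj hv h2

lemma not_memX {v : V} (hv : v ∈ D.Y) : v ∉ D.X := fun h2 => Set.disjoint_left.mp D.disj h2 hv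

lemma no_edge_XX {u v : V} (hu : u ∈ D.X) (hv : v ∈ D.X) : ¬ D.E u v := fun hE => by
  rcases D.mem_of_edge u v hE with ⟨_, h2⟩ | ⟨h1, _⟩
  · exact D.not_memY hv h2
  · exact D.not_memY hu h1

lemma other_memY {v a : V} (hv : v ∈ D.X) (hE : D.E v a ∨ D.E a v) : a ∈ D.Y := by
  rcases hE with hE | hE
  · rcases D.mem_of_edge v a hE with ⟨_, h⟩ | ⟨h, _⟩
    · exact h
    · exact absurd h (D.not_memY hv)
  · rcases D.mem_of_edge a v hE with ⟨_, h⟩ | ⟨h, _⟩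
    · exact absurd h (D.not_memY hv)
    · exact h

/-- Swap the two sides of the bipartition. -/
def swap : TwoPartiteDigraph V where
  X := D.Y
  Y := D.X
  cover := by rw [Set.union_comm]; exact D.cover
  disj := D.disj.symm
  E := D.E
  mem_of_edge := fun u v hE => (D.mem_of_edge u v hE).symm
  not_opposite := D.not_opposite

lemma swap_generic (h : D.IsGeneric) : D.swap.IsGeneric := by
  constructor
  · intro x hx y hy
    exact (h.1 y hy x hx).symm
  · intro AX BX hAXf hBXf hAX hBX hdX AY BY hAYf hBYf hAY hBY hdY
    exact ⟨(h.2 AY BY hAYf hBYf hAY hBY hdY AX BX hAXf hBXf hAX hBX hdX).2,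
      (h.2 AY BY hAYf hBYf hAY hBY hdY AX BX hAXf hBXf hAX hBX hdX).1⟩

lemma swap_partialIso {B : Set V} {ψ : V → V} (hψ : D.IsPartialIso B ψ) :
    D.swap.IsPartialIso B ψ :=
  ⟨hψ.1, hψ.2.2.1, hψ.2.1, hψ.2.2.2⟩

lemma partialIso_of_swap {B : Set V} {ψ : V → V} (hψ : D.swap.IsPartialIso B ψ) :
    D.IsPartialIso B ψ :=
  ⟨hψ.1, hψ.2.2.1, hψ.2.1, hψ.2.2.2⟩

/-- Genericity with avoidance of a finite set: an `x`-witness outside `S`. -/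
lemma exists_x_avoid (h : D.IsGeneric) {AY BY S : Set V} (hAYf : AY.Finite)
    (hBYf : BY.Finite) (hAY : AY ⊆ D.Y) (hBY : BY ⊆ D.Y) (hd : Disjoint AY BY)
    (hSf : S.Finite) :
    ∃ x ∈ D.X, x ∉ S ∧ AY ⊆ D.Nplus x ∧ BY ⊆ D.Nminus x := by
  -- auxiliary x₁ : reversed witness
  obtain ⟨x₁, hx₁X, hx₁A, hx₁B⟩ :=
    (h.2 ∅ ∅ Set.finite_empty Set.finite_empty (Set.empty_subset _) (Set.empty_subset _)
      disjoint_bot_left BY AY hBYf hAYf hBY hAY hd.symm).2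
  -- auxiliary y₀ beating S ∩ X and x₁
  obtain ⟨y₀, hy₀Y, hy₀A, -⟩ :=
    (h.2 (insert x₁ (S ∩ D.X)) ∅ ((hSf.inter_of_left _).insert x₁) Set.finite_empty
      (Set.insert_subset hx₁X Set.inter_subset_right) (Set.empty_subset _)
      disjoint_bot_right ∅ ∅ Set.finite_empty Set.finite_empty (Set.empty_subset _)
      (Set.empty_subset _) disjoint_bot_left).1
  have hy₀x₁ : D.E y₀ x₁ := hy₀A (Set.mem_insert _ _)
  have hy₀BY : y₀ ∉ BY := by
    intro hmem
    exact D.not_opposite x₁ y₀ (hx₁A hmem) hy₀x₁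
  obtain ⟨x, hxX, hxA, hxB⟩ :=
    (h.2 ∅ ∅ Set.finite_empty Set.finite_empty (Set.empty_subset _) (Set.empty_subset _)
      disjoint_bot_left (insert y₀ AY) BY (hAYf.insert y₀) hBYf
      (Set.insert_subset hy₀Y hAY) hBY
      (Set.disjoint_left.mpr (by
        rintro a (rfl | ha) hb
        · exact hy₀BY hb
        · exact Set.disjoint_left.mp hd ha hb))).2
  refine ⟨x, hxX, ?_, fun a ha => hxA (Set.mem_insert_of_mem _ ha), hxB⟩
  intro hxS
  have hy₀x : D.E y₀ x := hy₀A (Set.mem_insert_of_mem _ ⟨hxS, hxX⟩)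
  exact D.not_opposite x y₀ (hxA (Set.mem_insert _ _)) hy₀x

lemma exists_y_avoid (h : D.IsGeneric) {AX BX S : Set V} (hAXf : AX.Finite)
    (hBXf : BX.Finite) (hAX : AX ⊆ D.X) (hBX : BX ⊆ D.X) (hd : Disjoint AX BX)
    (hSf : S.Finite) :
    ∃ y ∈ D.Y, y ∉ S ∧ AX ⊆ D.Nplus y ∧ BX ⊆ D.Nminus y :=
  D.swap.exists_x_avoid (D.swap_generic h) hAXf hBXf hAX hBX hd hSf

/-- One-point extension of a finite partial isomorphism, for `v ∈ D.X`. -/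
lemma one_point_X (h : D.IsGeneric) {B : Set V} (hB : B.Finite) {ψ : V → V}
    (hψ : D.IsPartialIso B ψ) {v : V} (hvB : v ∉ B) (hvX : v ∈ D.X) :
    ∃ ψ' : V → V, D.IsPartialIso (insert v B) ψ' ∧ ∀ b ∈ B, ψ' b = ψ b := by
  classical
  obtain ⟨inj, hX, hY, hE⟩ := hψ
  set AY : Set V := ψ '' {a | a ∈ B ∧ D.E v a} with hAYdef
  set BY : Set V := ψ '' {a | a ∈ B ∧ D.E a v} with hBYdef
  have hAYsub : AY ⊆ D.Y := by
    rintro _ ⟨a, ⟨haB, hva⟩, rfl⟩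
    exact (hY a haB).mp (D.other_memY hvX (Or.inl hva))
  have hBYsub : BY ⊆ D.Y := by
    rintro _ ⟨a, ⟨haB, hva⟩, rfl⟩
    exact (hY a haB).mp (D.other_memY hvX (Or.inr hva))
  have hdis : Disjoint AY BY := by
    rw [Set.disjoint_left]
    rintro _ ⟨a, ⟨haB, hva⟩, rfl⟩ ⟨b, ⟨hbB, hbv⟩, hba⟩
    have : b = a := inj hbB haB hba
    subst this
    exact D.not_opposite v b hva hbv
  obtain ⟨x, hxX, hxS, hxA, hxB⟩ := D.exists_x_avoid h
    ((hB.subset (Set.sep_subset _ _)).image ψ) ((hB.subset (Set.sep_subset _ _)).image ψ)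
    hAYsub hBYsub hdis (hB.image ψ)
  refine ⟨Function.update ψ v x, ⟨?_, ?_, ?_, ?_⟩, fun b hb => Function.update_of_ne
    (ne_of_mem_of_not_mem hb hvB) x ψ⟩
  · -- injectivity
    rintro a (rfl | haB) b (rfl | hbB) hab
    · rfl
    · rw [Function.update_self, Function.update_of_ne (ne_of_mem_of_not_mem hbB hvB)] at hab
      exact absurd ⟨b, hbB, hab.symm⟩ hxS
    · rw [Function.update_self, Function.update_of_ne (ne_of_mem_of_not_mem haB hvB)] at hab
      exact absurd ⟨a, haB, hab⟩ hxS
    · rw [Function.update_of_ne (ne_of_mem_of_not_mem haB hvB),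
        Function.update_of_ne (ne_of_mem_of_not_mem hbB hvB)] at hab
      exact inj haB hbB hab
  · rintro a (rfl | haB)
    · rw [Function.update_self]
      exact iff_of_true hvX hxX
    · rw [Function.update_of_ne (ne_of_mem_of_not_mem haB hvB)]
      exact hX a haB
  · rintro a (rfl | haB)
    · rw [Function.update_self]
      exact iff_of_false (D.not_memY hvX) (D.not_memY hxX)
    · rw [Function.update_of_ne (ne_of_mem_of_not_mem haB hvB)]
      exact hY a haB
  · rintro a (rfl | haB) b (rfl | hbB)
    · rw [Function.update_self]
      exact iff_of_false (D.no_self _) (D.no_self x)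
    · rw [Function.update_self, Function.update_of_ne (ne_of_mem_of_not_mem hbB hvB)]
      rcases D.mem_or b with hbb | hbb
      · exact iff_of_false (D.no_edge_XX hvX hbb)
          (D.no_edge_XX hxX ((hX b hbB).mp hbb))
      · constructor
        · intro hvb
          exact hxA ⟨b, ⟨hbB, hvb⟩, rfl⟩
        · intro hxb
          rcases h.1 a hvX b hbb with hvb | hbv
          · exact hvb
          · exact absurd hxb (D.not_opposite _ _ (hxB ⟨b, ⟨hbB, hbv⟩, rfl⟩))
    · rw [Function.update_self, Function.update_of_ne (ne_of_mem_of_not_mem haB hvB)]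
      rcases D.mem_or a with haa | haa
      · exact iff_of_false (D.no_edge_XX haa hvX)
          (D.no_edge_XX ((hX a haB).mp haa) hxX)
      · constructor
        · intro hav
          exact hxB ⟨a, ⟨haB, hav⟩, rfl⟩
        · intro hax
          rcases h.1 b hvX a haa with hva | hav
          · exact absurd hax (D.not_opposite _ _ (hxA ⟨a, ⟨haB, hva⟩, rfl⟩))
          · exact hav
    · rw [Function.update_of_ne (ne_of_mem_of_not_mem haB hvB),
        Function.update_of_ne (ne_of_mem_of_not_mem hbB hvB)]
      exact hE a haB b hbB

/-- One-point extension of a finite partial isomorphism. -/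
lemma one_point (h : D.IsGeneric) {B : Set V} (hB : B.Finite) {ψ : V → V}
    (hψ : D.IsPartialIso B ψ) (v : V) :
    ∃ ψ' : V → V, D.IsPartialIso (insert v B) ψ' ∧ ∀ b ∈ B, ψ' b = ψ b := by
  by_cases hvB : v ∈ B
  · exact ⟨ψ, by rwa [Set.insert_eq_self.2 hvB], fun b _ => rfl⟩
  rcases D.mem_or v with hvX | hvY
  · exact D.one_point_X h hB hψ hvB hvX
  · obtain ⟨ψ', hψ', hagree⟩ := D.swap.one_point_X (D.swap_generic h) hB
      (D.swap_partialIso hψ) hvB hvY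
    exact ⟨ψ', D.partialIso_of_swap hψ', hagree⟩

/-- The inverse of a partial isomorphism is a partial isomorphism. -/
lemma inv_partialIso [Nonempty V] {B : Set V} {ψ : V → V} (hψ : D.IsPartialIso B ψ) :
    D.IsPartialIso (ψ '' B) (Function.invFunOn ψ B) := by
  obtain ⟨inj, hX, hY, hE⟩ := hψ
  have hinv : ∀ b ∈ B, Function.invFunOn ψ B (ψ b) = b := fun b hb =>
    inj.leftInvOn_invFunOn hb
  refine ⟨?_, ?_, ?_, ?_⟩
  · rintro _ ⟨a, ha, rfl⟩ _ ⟨b, hb, rfl⟩ hab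
    rw [hinv a ha, hinv b hb] at hab
    rw [hab]
  · rintro _ ⟨a, ha, rfl⟩
    rw [hinv a ha]
    exact (hX a ha).symm
  · rintro _ ⟨a, ha, rfl⟩
    rw [hinv a ha]
    exact (hY a ha).symm
  · rintro _ ⟨a, ha, rfl⟩ _ ⟨b, hb, rfl⟩
    rw [hinv a ha, hinv b hb]
    exact (hE a ha b hb).symm

/-- Extension step: put `v` into both the domain and the image. -/
lemma extend_point [Nonempty V] (h : D.IsGeneric) {B : Set V} (hB : B.Finite) {ψ : V → V}
    (hψ : D.IsPartialIso B ψ) (v : V) :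
    ∃ B' : Set V, ∃ ψ' : V → V, B ⊆ B' ∧ B'.Finite ∧ D.IsPartialIso B' ψ' ∧
      (∀ b ∈ B, ψ' b = ψ b) ∧ v ∈ B' ∧ v ∈ ψ' '' B' := by
  classical
  obtain ⟨ψ₁, hψ₁, hag₁⟩ := D.one_point h hB hψ v
  set B₁ : Set V := insert v B with hB₁def
  have hB₁f : B₁.Finite := hB.insert v
  by_cases hv : v ∈ ψ₁ '' B₁
  · exact ⟨B₁, ψ₁, Set.subset_insert v B, hB₁f, hψ₁, hag₁, Set.mem_insert v B, hv⟩
  obtain ⟨χ', hχ', hagχ⟩ := D.one_point h (hB₁f.image ψ₁) (D.inv_partialIso hψ₁) v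
  set u : V := χ' v with hudef
  have hχinv : ∀ b ∈ B₁, χ' (ψ₁ b) = b := fun b hb => by
    rw [hagχ (ψ₁ b) ⟨b, hb, rfl⟩]
    exact hψ₁.1.leftInvOn_invFunOn hb
  have huB₁ : u ∉ B₁ := by
    intro huB
    have h1 : χ' (ψ₁ u) = χ' v := hχinv u huB
    have h2 : ψ₁ u = v := hχ'.1 (Set.mem_insert_of_mem _ ⟨u, huB, rfl⟩)
      (Set.mem_insert _ _) h1
    exact hv ⟨u, huB, h2⟩
  refine ⟨insert u B₁, Function.update ψ₁ u v, (Set.subset_insert v B).trans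
    (Set.subset_insert u B₁), hB₁f.insert u, ⟨?_, ?_, ?_, ?_⟩, ?_,
    Set.mem_insert_of_mem _ (Set.mem_insert v B),
    ⟨u, Set.mem_insert u B₁, Function.update_self u v ψ₁⟩⟩
  · rintro a (rfl | haB) b (rfl | hbB) hab
    · rfl
    · rw [Function.update_self, Function.update_of_ne (ne_of_mem_of_not_mem hbB huB₁)] at hab
      exact absurd ⟨b, hbB, hab.symm⟩ hv
    · rw [Function.update_self, Function.update_of_ne (ne_of_mem_of_not_mem haB huB₁)] at hab
      exact absurd ⟨a, haB, hab⟩ hv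
    · rw [Function.update_of_ne (ne_of_mem_of_not_mem haB huB₁),
        Function.update_of_ne (ne_of_mem_of_not_mem hbB huB₁)] at hab
      exact hψ₁.1 haB hbB hab
  · rintro a (rfl | haB)
    · rw [Function.update_self]
      exact (hχ'.2.1 v (Set.mem_insert _ _)).symm
    · rw [Function.update_of_ne (ne_of_mem_of_not_mem haB huB₁)]
      exact hψ₁.2.1 a haB
  · rintro a (rfl | haB)
    · rw [Function.update_self]
      exact (hχ'.2.2.1 v (Set.mem_insert _ _)).symm
    · rw [Function.update_of_ne (ne_of_mem_of_not_mem haB huB₁)]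
      exact hψ₁.2.2.1 a haB
  · rintro a (rfl | haB) b (rfl | hbB)
    · rw [Function.update_self]
      exact iff_of_false (D.no_self _) (D.no_self v)
    · rw [Function.update_self, Function.update_of_ne (ne_of_mem_of_not_mem hbB huB₁)]
      have := hχ'.2.2.2 v (Set.mem_insert _ _) (ψ₁ b)
        (Set.mem_insert_of_mem _ ⟨b, hbB, rfl⟩)
      rw [hχinv b hbB] at this
      exact this.symm
    · rw [Function.update_self, Function.update_of_ne (ne_of_mem_of_not_mem haB huB₁)]
      have := hχ'.2.2.2 (ψ₁ a) (Set.mem_insert_of_mem _ ⟨a, haB, rfl⟩) v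
        (Set.mem_insert _ _)
      rw [hχinv a haB] at this
      exact this.symm
    · rw [Function.update_of_ne (ne_of_mem_of_not_mem haB huB₁),
        Function.update_of_ne (ne_of_mem_of_not_mem hbB huB₁)]
      exact hψ₁.2.2.2 a haB b hbB
  · intro b hb
    rw [Function.update_of_ne (ne_of_mem_of_not_mem (Set.mem_insert_of_mem v hb) huB₁)]
    exact hag₁ b hb

end TwoPartiteDigraph

end Helpers

/-- The countable generic 2-partite digraph is homogeneous. -/
theorem stmt_5 {V : Type*} [Countable V] (D : TwoPartiteDigraph V) (h : D.IsGeneric) :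
    D.Homogeneous := by
  intro A hA φ hφ
  cases isEmpty_or_nonempty V with
  | inl hempty =>
    exact ⟨Equiv.refl V, ⟨fun v => isEmptyElim v, fun v => isEmptyElim v,
      fun u v => isEmptyElim u⟩, fun a _ => isEmptyElim a⟩
  | inr hne =>
    obtain ⟨f, hf⟩ := exists_surjective_nat V
    -- the type of finite partial isomorphisms
    let T := {p : Set V × (V → V) // p.1.Finite ∧ D.IsPartialIso p.1 p.2}
    have step : ∀ (t : T) (n : ℕ), ∃ t' : T, t.1.1 ⊆ t'.1.1 ∧
        (∀ b ∈ t.1.1, t'.1.2 b = t.1.2 b) ∧ f n ∈ t'.1.1 ∧ f n ∈ t'.1.2 '' t'.1.1 := by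
      rintro ⟨⟨B, ψ⟩, hBf, hψ⟩ n
      obtain ⟨B', ψ', h1, h2, h3, h4, h5, h6⟩ := D.extend_point h hBf hψ (f n)
      exact ⟨⟨⟨B', ψ'⟩, h2, h3⟩, h1, h4, h5, h6⟩
    choose F hF1 hF2 hF3 hF4 using step
    let t0 : T := ⟨⟨A, φ⟩, hA, hφ⟩
    let S : ℕ → T := fun n => Nat.rec t0 (fun n t => F t n) n
    have hSsucc : ∀ n, S (n + 1) = F (S n) n := fun n => rfl
    set Bn : ℕ → Set V := fun n => (S n).1.1 with hBn
    set ψn : ℕ → V → V := fun n => (S n).1.2 with hψn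
    have hiso : ∀ n, D.IsPartialIso (Bn n) (ψn n) := fun n => (S n).2.2
    have hmono : ∀ m n, m ≤ n → Bn m ⊆ Bn n := by
      intro m n hmn
      induction n, hmn using Nat.le_induction with
      | base => exact subset_rfl
      | succ n hmn ih => exact ih.trans (hF1 (S n) n)
    have hagree : ∀ m n, m ≤ n → ∀ b ∈ Bn m, ψn n b = ψn m b := by
      intro m n hmn
      induction n, hmn using Nat.le_induction with
      | base => exact fun b _ => rfl
      | succ n hmn ih =>
        intro b hb
        exact (hF2 (S n) n b (hmono m n hmn hb)).trans (ih b hb)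
    have hidx : ∀ v : V, v ∈ Bn ((hf v).choose + 1) := by
      intro v
      have h3 := hF3 (S (hf v).choose) (hf v).choose
      rw [(hf v).choose_spec] at h3
      exact h3
    set g : V → V := fun v => ψn ((hf v).choose + 1) v with hg
    have hkey : ∀ (v : V) (n : ℕ), v ∈ Bn n → g v = ψn n v := by
      intro v n hv
      have h1 := hagree ((hf v).choose + 1) (max ((hf v).choose + 1) n)
        (le_max_left _ _) v (hidx v)
      have h2 := hagree n (max ((hf v).choose + 1) n) (le_max_right _ _) v hv
      rw [hg]
      dsimp only
      rw [← h1, h2]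
    have hinj : Function.Injective g := by
      intro u v huv
      set N := max ((hf u).choose + 1) ((hf v).choose + 1) with hN
      have hu : u ∈ Bn N := hmono _ _ (le_max_left _ _) (hidx u)
      have hv : v ∈ Bn N := hmono _ _ (le_max_right _ _) (hidx v)
      rw [hkey u N hu, hkey v N hv] at huv
      exact (hiso N).1 hu hv huv
    have hsurj : Function.Surjective g := by
      intro w
      have h4 := hF4 (S (hf w).choose) (hf w).choose
      rw [(hf w).choose_spec] at h4
      obtain ⟨b, hb, hbe⟩ := h4
      exact ⟨b, (hkey b ((hf w).choose + 1) hb).trans hbe⟩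
    refine ⟨Equiv.ofBijective g ⟨hinj, hsurj⟩, ⟨?_, ?_, ?_⟩, ?_⟩
    · intro v
      show v ∈ D.X ↔ g v ∈ D.X
      rw [hkey v ((hf v).choose + 1) (hidx v)]
      exact (hiso ((hf v).choose + 1)).2.1 v (hidx v)
    · intro v
      show v ∈ D.Y ↔ g v ∈ D.Y
      rw [hkey v ((hf v).choose + 1) (hidx v)]
      exact (hiso ((hf v).choose + 1)).2.2.1 v (hidx v)
    · intro u v
      show D.E u v ↔ D.E (g u) (g v)
      set N := max ((hf u).choose + 1) ((hf v).choose + 1) with hN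
      have hu : u ∈ Bn N := hmono _ _ (le_max_left _ _) (hidx u)
      have hv : v ∈ Bn N := hmono _ _ (le_max_right _ _) (hidx v)
      rw [hkey u N hu, hkey v N hv]
      exact (hiso N).2.2.2 u hu v hv
    · intro a ha
      show g a = φ a
      exact hkey a 0 ha
end

section
/- Let D = (X,Y,E) be a homogeneous 2-partite digraph and v a vertex with N⁺(v) and N⁻(v) infinite and v^⊥ finite. Then v^⊥ = ∅. -/
open TwoPartiteDigraph

/-! Suppose `w ∈ v^⊥`. Each part is an independent set, so homogeneity realises any injection
between finite subsets of one part by an automorphism. For a finite set `s` of in-neighbours of a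
vertex `p` and `a ∈ s`, moving an out-neighbour of `p` onto `a` while fixing `s \ {a}` turns `p`
into a vertex `x_a` with `x_a → a` and `b → x_a` for all other `b ∈ s`; the `x_a` are pairwise
distinct, as `x_a = x_b` would give `x_a → a → x_a`. Taking `p = v` and also moving a second
out-neighbour of `v` onto `w` puts the `x_a` in `N⁻(w)`, so `N⁻(w)` is infinite. Taking `p = w`
(which has an out-neighbour, being in the same part as the in-neighbours of `v`) and fixing `v`
puts them in `v^⊥`, so `v^⊥` is infinite. -/

namespace TwoPartiteDigraph

variable {V : Type*} {D : TwoPartiteDigraph V}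

def SameSide (D : TwoPartiteDigraph V) (u w : V) : Prop := u ∈ D.X ↔ w ∈ D.X

lemma SameSide.refl (u : V) : D.SameSide u u := Iff.rfl

lemma SameSide.symm {u w : V} (h : D.SameSide u w) : D.SameSide w u := Iff.symm h

lemma SameSide.trans {u v w : V} (h₁ : D.SameSide u v) (h₂ : D.SameSide v w) :
    D.SameSide u w :=
  Iff.trans h₁ h₂

lemma sameSide_of_not_of_not {u v w : V} (h₁ : ¬ D.SameSide u v) (h₂ : ¬ D.SameSide v w) :
    D.SameSide u w := by
  unfold SameSide at *
  tauto

lemma mem_Y_iff {v : V} : v ∈ D.Y ↔ v ∉ D.X := by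
  refine ⟨fun hY hX => Set.disjoint_left.mp D.disj hX hY, fun hX => ?_⟩
  have hv : v ∈ D.X ∪ D.Y := D.cover ▸ Set.mem_univ v
  exact hv.resolve_left hX

lemma not_sameSide_of_edge {u w : V} (h : D.E u w) : ¬ D.SameSide u w := by
  unfold SameSide
  rcases D.mem_of_edge u w h with ⟨hu, hw⟩ | ⟨hu, hw⟩ <;>
    simp only [mem_Y_iff] at hu hw <;> tauto

lemma not_edge_of_sameSide {u w : V} (h : D.SameSide u w) : ¬ D.E u w :=
  fun hE => not_sameSide_of_edge hE h

lemma mem_perp_iff {v w : V} : w ∈ D.perp v ↔ ¬ D.SameSide v w ∧ ¬ D.Adj v w := by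
  simp only [perp, SameSide, Set.mem_ofPred_eq, mem_Y_iff]
  tauto

lemma IsAuto.sameSide_apply {α : Equiv.Perm V} (hα : D.IsAuto α) (v : V) :
    D.SameSide (α v) v := (hα.1 v).symm

lemma IsAuto.edge_apply {α : Equiv.Perm V} (hα : D.IsAuto α) {u w : V} (h : D.E u w) :
    D.E (α u) (α w) := (hα.2.2 u w).1 h

lemma IsAuto.adj_apply_iff {α : Equiv.Perm V} (hα : D.IsAuto α) {u w : V} :
    D.Adj (α u) (α w) ↔ D.Adj u w :=
  (or_congr (hα.2.2 u w) (hα.2.2 w u)).symm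

lemma isPartialIso_of_sameSide {A : Set V} {φ : V → V} {t : V}
    (hA : ∀ a ∈ A, D.SameSide a t) (hφ : ∀ a ∈ A, D.SameSide (φ a) t)
    (hinj : Set.InjOn φ A) : D.IsPartialIso A φ := by
  refine ⟨hinj, fun a ha => (hA a ha).trans (hφ a ha).symm, fun a ha => ?_, fun a ha b hb => ?_⟩
  · rw [mem_Y_iff, mem_Y_iff]
    exact not_congr ((hA a ha).trans (hφ a ha).symm)
  · exact iff_of_false (not_edge_of_sameSide ((hA a ha).trans (hA b hb).symm))
      (not_edge_of_sameSide ((hφ a ha).trans (hφ b hb).symm))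

lemma exists_isAuto_apply_eq (hhom : D.Homogeneous) {u w : V} (h : D.SameSide u w) :
    ∃ α, D.IsAuto α ∧ α u = w := by
  obtain ⟨α, hα, hαu⟩ := hhom {u} (Set.finite_singleton u) (fun _ => w)
    (isPartialIso_of_sameSide (t := w) (by simpa using h) (by simp [SameSide.refl])
      (Set.injOn_singleton _ _))
  exact ⟨α, hα, hαu u rfl⟩

lemma nplus_nonempty_of_sameSide (hhom : D.Homogeneous) {u w : V} (h : D.SameSide u w)
    (hu : (D.Nplus u).Nonempty) : (D.Nplus w).Nonempty := by
  obtain ⟨y, hy⟩ := hu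
  obtain ⟨α, hα, rfl⟩ := exists_isAuto_apply_eq hhom h
  exact ⟨α y, hα.edge_apply hy⟩

lemma exists_isAuto_fixing_erase (hhom : D.Homogeneous) {s : Finset V} {a c d d' t : V}
    (hs : ∀ b ∈ s, D.SameSide b t) (hc : D.SameSide c t) (hd : D.SameSide d t)
    (hd' : D.SameSide d' t) (ha : a ∈ s) (hcd : c ≠ d) (hcs : c ∉ s) (hds : d ∉ s)
    (hd's : d' ∉ s) :
    ∃ α, D.IsAuto α ∧ α c = a ∧ α d = d' ∧ ∀ b ∈ s, b ≠ a → α b = b := by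
  classical
  set φ : V → V := Function.update (Function.update id d d') c a
  set A : Set V := insert c (insert d ↑(s.erase a))
  have hφc : φ c = a := by simp [φ]
  have hφd : φ d = d' := by simp [φ, hcd.symm]
  have hφs : ∀ b ∈ s, φ b = b := fun b hb => by
    simp [φ, show b ≠ c by rintro rfl; exact hcs hb, show b ≠ d by rintro rfl; exact hds hb]
  have hinj : Set.InjOn φ A := by
    intro x hx y hy hxy
    simp only [A, Set.mem_insert_iff, Finset.coe_erase, Set.mem_sdiff, Finset.mem_coe,
      Set.mem_singleton_iff] at hx hy
    rcases hx with rfl | rfl | ⟨hx, hxa⟩ <;> rcases hy with rfl | rfl | ⟨hy, hya⟩ <;>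
      grind
  have hAt : ∀ x ∈ A, D.SameSide x t := by
    simp only [A, Set.mem_insert_iff, Finset.coe_erase, Set.mem_sdiff, Finset.mem_coe]
    rintro x (rfl | rfl | ⟨hx, -⟩)
    exacts [hc, hd, hs x hx]
  have hφt : ∀ x ∈ A, D.SameSide (φ x) t := by
    simp only [A, Set.mem_insert_iff, Finset.coe_erase, Set.mem_sdiff, Finset.mem_coe]
    rintro x (rfl | rfl | ⟨hx, -⟩)
    exacts [hφc ▸ hs a ha, hφd ▸ hd', (hφs x hx).symm ▸ hs x hx]
  obtain ⟨α, hα, hαφ⟩ := hhom A ((((s.erase a).finite_toSet).insert d).insert c) φ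
    (isPartialIso_of_sameSide hAt hφt hinj)
  refine ⟨α, hα, (hαφ c (by simp [A])).trans hφc, (hαφ d (by simp [A])).trans hφd,
    fun b hb hba => (hαφ b (by simp [A, hb, hba])).trans (hφs b hb)⟩

/-- `x` separates `a` from the rest of `s` if `x → a` and `b → x` for every other `b ∈ s`. -/
lemma card_le_ncard_of_forall_exists_separating {s : Finset V} {F : Set V} (hF : F.Finite)
    (h : ∀ a ∈ s, ∃ x ∈ F, D.E x a ∧ ∀ b ∈ s, b ≠ a → D.E b x) : s.card ≤ F.ncard := by
  choose! f hfF hfa hfb using h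
  have hinj : Set.InjOn f s := by
    intro a ha b hb hab
    by_contra hne
    exact D.not_opposite _ _ (hfa a ha) (hab ▸ hfb b hb a ha hne)
  simpa using Set.ncard_le_ncard_of_injOn f hfF hinj hF

lemma infinite_of_forall_exists_separating {P F : Set V} (hP : P.Infinite)
    (h : ∀ s : Finset V, ↑s ⊆ P → ∀ a ∈ s, ∃ x ∈ F, D.E x a ∧ ∀ b ∈ s, b ≠ a → D.E b x) :
    F.Infinite := by
  intro hF
  obtain ⟨s, hsP, hs⟩ := hP.exists_subset_card_eq (F.ncard + 1)
  have := card_le_ncard_of_forall_exists_separating hF (h s hsP)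
  omega

lemma nminus_infinite_of_not_adj (hhom : D.Homogeneous) {v w : V}
    (hplus : (D.Nplus v).Infinite) (hminus : (D.Nminus v).Infinite)
    (hvw : ¬ D.SameSide v w) (hadj : ¬ D.Adj v w) : (D.Nminus w).Infinite := by
  obtain ⟨u₀, hu₀, u₁, hu₁, hne⟩ := hplus.nontrivial
  have hu₀w : D.SameSide u₀ w :=
    sameSide_of_not_of_not (fun h => not_sameSide_of_edge hu₀ h.symm) hvw
  have hu₁w : D.SameSide u₁ w :=
    sameSide_of_not_of_not (fun h => not_sameSide_of_edge hu₁ h.symm) hvw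
  refine infinite_of_forall_exists_separating (D := D) hminus fun s hs a ha => ?_
  have hsv : ∀ b ∈ s, D.E b v := fun b hb => hs hb
  have hnot_mem : ∀ u, D.E v u → u ∉ s := fun u hu hus => D.not_opposite _ _ hu (hsv u hus)
  obtain ⟨α, hα, hαu₁, hαu₀, hαs⟩ := exists_isAuto_fixing_erase hhom (t := w)
    (fun b hb => sameSide_of_not_of_not (not_sameSide_of_edge (hsv b hb)) hvw) hu₁w hu₀w
    (SameSide.refl w) ha hne.symm (hnot_mem u₁ hu₁) (hnot_mem u₀ hu₀)
    (fun hws => hadj (Or.inr (hsv w hws)))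
  refine ⟨α v, ?_, ?_, fun b hb hba => ?_⟩
  · exact hαu₀ ▸ hα.edge_apply hu₀
  · exact hαu₁ ▸ hα.edge_apply hu₁
  · exact hαs b hb hba ▸ hα.edge_apply (hsv b hb)

lemma perp_infinite_of_not_adj (hhom : D.Homogeneous) {v w y : V} (hy : D.E w y)
    (hminus : (D.Nminus w).Infinite) (hvw : ¬ D.SameSide v w) (hadj : ¬ D.Adj v w) :
    (D.perp v).Infinite := by
  refine infinite_of_forall_exists_separating (D := D) hminus fun s hs a ha => ?_
  have hsw : ∀ b ∈ s, D.E b w := fun b hb => hs hb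
  have hwv : ¬ D.SameSide w v := fun h => hvw h.symm
  obtain ⟨α, hα, hαy, hαv, hαs⟩ := exists_isAuto_fixing_erase hhom (t := v)
    (fun b hb => sameSide_of_not_of_not (not_sameSide_of_edge (hsw b hb)) hwv)
    (sameSide_of_not_of_not (fun h => not_sameSide_of_edge hy h.symm) hwv) (SameSide.refl v)
    (SameSide.refl v) ha (by rintro rfl; exact hadj (Or.inr hy))
    (fun hys => D.not_opposite _ _ hy (hsw y hys)) (fun hvs => hadj (Or.inl (hsw v hvs)))
    (fun hvs => hadj (Or.inl (hsw v hvs)))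
  refine ⟨α w, mem_perp_iff.2 ⟨fun h => hvw (h.trans (hα.sameSide_apply w)), ?_⟩, ?_,
    fun b hb hba => ?_⟩
  · rwa [← hαv, hα.adj_apply_iff]
  · exact hαy ▸ hα.edge_apply hy
  · exact hαs b hb hba ▸ hα.edge_apply (hsw b hb)

end TwoPartiteDigraph

/-- In a homogeneous 2-partite digraph, if a vertex `v` has infinite out- and
in-neighbourhood and finite `v^⊥`, then `v^⊥ = ∅`. -/
theorem stmt_9 {V : Type*} (D : TwoPartiteDigraph V) (hhom : D.Homogeneous) (v : V)
    (hplus : (D.Nplus v).Infinite) (hminus : (D.Nminus v).Infinite)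
    (hperp : (D.perp v).Finite) : D.perp v = ∅ := by
  by_contra hne
  obtain ⟨w, hw⟩ := Set.nonempty_iff_ne_empty.mpr hne
  obtain ⟨hvw, hadj⟩ := mem_perp_iff.1 hw
  obtain ⟨u, hu⟩ := hminus.nonempty
  have huw : D.SameSide u w := sameSide_of_not_of_not (not_sameSide_of_edge hu) hvw
  obtain ⟨y, hy⟩ := nplus_nonempty_of_sameSide hhom huw ⟨v, hu⟩
  have hminus_w := nminus_infinite_of_not_adj hhom hplus hminus hvw hadj
  exact perp_infinite_of_not_adj hhom hy hminus_w hvw hadj hperp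
end

section
/- Let D = (X,Y,E) be a homogeneous 2-partite digraph that is not bipartite, in which every vertex has exactly one successor and exactly one predecessor. Then D is a directed cycle of length 4, hence isomorphic to M_2. -/
open TwoPartiteDigraph

/-- A homogeneous non-bipartite 2-partite digraph in which every vertex has exactly
one successor and exactly one predecessor is a directed cycle of length 4, hence
isomorphic to `M₂`. -/
theorem stmt_12 {V : Type*} (D : TwoPartiteDigraph V) (hhom : D.Homogeneous)
    (hnb : ¬ D.Bipartite)
    (hsucc : ∀ v : V, ∃! w, D.E v w) (hpred : ∀ v : V, ∃! w, D.E w v) :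
    (∃ a b c d : V, a ≠ b ∧ a ≠ c ∧ a ≠ d ∧ b ≠ c ∧ b ≠ d ∧ c ≠ d ∧
      (∀ v : V, v = a ∨ v = b ∨ v = c ∨ v = d) ∧
      ∀ u v, D.E u v ↔ ((u = a ∧ v = b) ∨ (u = b ∧ v = c) ∨
        (u = c ∧ v = d) ∨ (u = d ∧ v = a))) ∧
    D.IsM ∧ Nat.card D.X = 2 := by
    classical
  choose s hs using hsucc
  have hsE : ∀ v, D.E v (s v) := fun v => (hs v).1
  have hsU : ∀ v w, D.E v w → w = s v := fun v w h => (hs v).2 w h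
  have hsInj : Function.Injective s := by
    intro u v huv
    obtain ⟨w, hw, hwu⟩ := hpred (s u)
    have h1 := hwu u (hsE u)
    have h2 := hwu v (huv ▸ hsE v)
    rw [h1, h2]
  have hmem : ∀ v : V, v ∈ D.X ∨ v ∈ D.Y := by
    intro v
    have hv : v ∈ D.X ∪ D.Y := by rw [D.cover]; trivial
    exact hv
  have hdisj : ∀ v : V, v ∈ D.X → v ∈ D.Y → False := fun v hx hy =>
    D.disj.ne_of_mem hx hy rfl
  have hXY : ∀ v, v ∈ D.X → s v ∈ D.Y := by
    intro v hv
    rcases D.mem_of_edge v (s v) (hsE v) with ⟨_, h⟩ | ⟨h, _⟩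
    · exact h
    · exact (hdisj v hv h).elim
  have hYX : ∀ v, v ∈ D.Y → s v ∈ D.X := by
    intro v hv
    rcases D.mem_of_edge v (s v) (hsE v) with ⟨h, _⟩ | ⟨_, h⟩
    · exact (hdisj v h hv).elim
    · exact h
  have hnoXX : ∀ u v, u ∈ D.X → v ∈ D.X → ¬ D.E u v := by
    intro u v hu hv h
    rcases D.mem_of_edge u v h with ⟨_, h2⟩ | ⟨h1, _⟩
    · exact hdisj v hv h2
    · exact hdisj u hu h1
  have hs2 : ∀ v, s (s v) ≠ v := by
    intro v h
    have h2 := hsE (s v)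
    rw [h] at h2
    exact D.not_opposite v (s v) (hsE v) h2
  -- get a vertex in X
  unfold TwoPartiteDigraph.Bipartite at hnb
  push_neg at hnb
  obtain ⟨⟨u₀, v₀, he₀, hu₀⟩, -⟩ := hnb
  have hu₀Y : u₀ ∈ D.Y := (hmem u₀).resolve_left hu₀
  set x := s u₀ with hxdef
  have hx : x ∈ D.X := hYX u₀ hu₀Y
  have hb : s x ∈ D.Y := hXY x hx
  have hc : s (s x) ∈ D.X := hYX _ hb
  have hd : s (s (s x)) ∈ D.Y := hXY _ hc
  -- key homogeneity claim
  have key : ∀ x'', x'' ∈ D.X → x'' ≠ x → x'' = s (s x) := by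
    intro x'' hx'' hne
    have hcx : s (s x) ≠ x := hs2 x
    set φ : V → V := fun v => if v = x then x else x'' with hφ
    have hφx : φ x = x := if_pos rfl
    have hφc : φ (s (s x)) = x'' := if_neg hcx
    have hiso : D.IsPartialIso {x, s (s x)} φ := by
      refine ⟨?_, ?_, ?_, ?_⟩
      · intro a ha b hb hab
        rcases ha with rfl | ha
        · rcases hb with rfl | hb
          · rfl
          · rcases hb with rfl
            rw [hφx, hφc] at hab
            exact (hne hab.symm).elim
        · rcases ha with rfl
          rcases hb with rfl | hb
          · rw [hφx, hφc] at hab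
            exact (hne hab).elim
          · rcases hb with rfl
            rfl
      · intro a ha
        have haX : a ∈ D.X := by rcases ha with rfl | ha; · exact hx
                                 · rcases ha with rfl; exact hc
        have hφaX : φ a ∈ D.X := by
          rcases ha with rfl | ha
          · rw [hφx]; exact hx
          · rcases ha with rfl; rw [hφc]; exact hx''
        exact iff_of_true haX hφaX
      · intro a ha
        have haX : a ∈ D.X := by rcases ha with rfl | ha; · exact hx
                                 · rcases ha with rfl; exact hc
        have hφaX : φ a ∈ D.X := by
          rcases ha with rfl | ha
          · rw [hφx]; exact hx
          · rcases ha with rfl; rw [hφc]; exact hx''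
        exact iff_of_false (fun h => hdisj a haX h) (fun h => hdisj _ hφaX h)
      · intro a ha b hb
        have haX : a ∈ D.X := by rcases ha with rfl | ha; · exact hx
                                 · rcases ha with rfl; exact hc
        have hbX : b ∈ D.X := by rcases hb with rfl | hb; · exact hx
                                 · rcases hb with rfl; exact hc
        have hφaX : φ a ∈ D.X := by
          rcases ha with rfl | ha
          · rw [hφx]; exact hx
          · rcases ha with rfl; rw [hφc]; exact hx''
        have hφbX : φ b ∈ D.X := by
          rcases hb with rfl | hb
          · rw [hφx]; exact hx
          · rcases hb with rfl; rw [hφc]; exact hx''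
        exact iff_of_false (hnoXX a b haX hbX) (hnoXX _ _ hφaX hφbX)
    obtain ⟨α, hauto, hext⟩ := hhom {x, s (s x)}
      ((Set.finite_singleton _).insert _) φ hiso
    have hcomm : ∀ v, α (s v) = s (α v) := fun v =>
      hsU (α v) (α (s v)) ((hauto.2.2 v (s v)).mp (hsE v))
    have hαx : α x = x := by
      have := hext x (Set.mem_insert _ _)
      rwa [hφx] at this
    have hαc : α (s (s x)) = x'' := by
      have := hext (s (s x)) (Set.mem_insert_of_mem _ rfl)
      rwa [hφc] at this
    rw [← hαc, hcomm, hcomm, hαx]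
  -- s⁴ x = x
  have hc2 : s (s (s (s x))) ∈ D.X := hYX _ hd
  have hs4 : s (s (s (s x))) = x := by
    by_contra h
    exact hs2 (s (s x)) (key _ hc2 h)
  have hXall : ∀ v ∈ D.X, v = x ∨ v = s (s x) := by
    intro v hv
    by_cases h : v = x
    · exact Or.inl h
    · exact Or.inr (key v hv h)
  have hYall : ∀ v ∈ D.Y, v = s x ∨ v = s (s (s x)) := by
    intro v hv
    rcases hXall (s v) (hYX v hv) with h | h
    · right
      exact hsInj (by rw [h, hs4])
    · left
      exact hsInj h
  -- distinctness
  have hac : x ≠ s (s x) := fun h => hs2 x h.symm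
  have hab : x ≠ s x := fun h => hdisj x hx (h ▸ hb)
  have had : x ≠ s (s (s x)) := fun h => hdisj x hx (h ▸ hd)
  have hbc : s x ≠ s (s x) := fun h => hdisj _ hc (h ▸ hb)
  have hbd : s x ≠ s (s (s x)) := fun h => hac (hsInj h)
  have hcd : s (s x) ≠ s (s (s x)) := fun h => hdisj _ hc (h ▸ hd)
  have hall : ∀ v : V, v = x ∨ v = s x ∨ v = s (s x) ∨ v = s (s (s x)) := by
    intro v
    rcases hmem v with hv | hv
    · rcases hXall v hv with h | h
      · exact Or.inl h
      · exact Or.inr (Or.inr (Or.inl h))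
    · rcases hYall v hv with h | h
      · exact Or.inr (Or.inl h)
      · exact Or.inr (Or.inr (Or.inr h))
  have hEchar : ∀ u v, D.E u v ↔ ((u = x ∧ v = s x) ∨ (u = s x ∧ v = s (s x)) ∨
      (u = s (s x) ∧ v = s (s (s x))) ∨ (u = s (s (s x)) ∧ v = x)) := by
    intro u v
    constructor
    · intro h
      have hv : v = s u := hsU u v h
      rcases hall u with rfl | rfl | rfl | rfl
      · exact Or.inl ⟨rfl, hv⟩
      · exact Or.inr (Or.inl ⟨rfl, hv⟩)
      · exact Or.inr (Or.inr (Or.inl ⟨rfl, hv⟩))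
      · exact Or.inr (Or.inr (Or.inr ⟨rfl, by rw [hv, hs4]⟩))
    · rintro (⟨rfl, rfl⟩ | ⟨rfl, rfl⟩ | ⟨rfl, rfl⟩ | ⟨rfl, rfl⟩)
      · exact hsE x
      · exact hsE (s x)
      · exact hsE (s (s x))
      · have h2 := hsE (s (s (s x)))
        rw [hs4] at h2
        exact h2
  have hXeq : D.X = {x, s (s x)} := by
    ext v
    constructor
    · intro hv
      rcases hXall v hv with rfl | rfl
      · exact Set.mem_insert _ _
      · exact Set.mem_insert_of_mem _ rfl
    · rintro (rfl | rfl)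
      · exact hx
      · exact hc
  refine ⟨⟨x, s x, s (s x), s (s (s x)), hab, hac, had, hbc, hbd, hcd, hall, hEchar⟩, ?_, ?_⟩
  · refine ⟨s, ⟨fun v hv => hXY v hv, hsInj.injOn, ?_⟩, Or.inl ?_⟩
    · intro y hy
      rcases hYall y hy with rfl | rfl
      · exact ⟨x, hx, rfl⟩
      · exact ⟨s (s x), hc, rfl⟩
    · intro x' hx' y hy
      constructor
      · exact ⟨fun h => hsU x' y h, fun h => h ▸ hsE x'⟩
      · rcases hXall x' hx' with rfl | rfl <;> rcases hYall y hy with rfl | rfl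
        · exact iff_of_false (fun h => hac (hsU _ _ h)) (fun h => h rfl)
        · have h2 := hsE (s (s (s x)))
          rw [hs4] at h2
          exact iff_of_true h2 hbd.symm
        · exact iff_of_true (hsE (s x)) hbd
        · refine iff_of_false (fun h => ?_) (fun h => h rfl)
          have h2 := hsU _ _ h
          rw [hs4] at h2
          exact hac h2.symm
  · rw [hXeq, Nat.card_coe_set_eq, Set.ncard_pair hac]
end

section
/- Let D = (X,Y,E) be a homogeneous 2-partite digraph that is not bipartite, and suppose some vertex u ∈ X satisfies |N⁺(u)| = n with 2 ≤ n finite. Then |Y| = n + 1 and D ≅ M_{n+1}. -/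
open TwoPartiteDigraph

/-
Homogeneity makes the automorphism group act transitively on `X`, on pairs of distinct
vertices of `X`, and on `n`-subsets of `Y` (any bijection between two subsets of one side is
a partial isomorphism). Hence every `n`-subset of `Y` is an out-neighbourhood `N⁺(x)`, and
`|N⁺(x₁) ∩ N⁺(x₂)|` is the same number `k` for all `x₁ ≠ x₂` in `X`. Non-bipartiteness gives a
predecessor `y₀ ∉ N⁺(u)` of `u`; exchanging one element of `N⁺(u)` for `y₀` shows `k = n - 1`.
If `Y` had a further vertex outside `N⁺(u) ∪ {y₀}`, exchanging two elements would produce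
`k = n - 2`. So `Y = N⁺(u) ∪ {y₀}`, each `N⁺(x)` misses exactly one vertex `m x` of `Y`, the
unique predecessor of `x`, and `m` is a bijection `X → Y`.
-/

namespace TwoPartiteDigraph

variable {V : Type*} {D : TwoPartiteDigraph V} {u x z x₁ x₂ z₁ z₂ y : V}

lemma notMem_Y_of_mem_X (hx : x ∈ D.X) : x ∉ D.Y := Set.disjoint_left.mp D.disj hx

lemma notMem_X_of_mem_Y (hy : y ∈ D.Y) : y ∉ D.X := Set.disjoint_right.mp D.disj hy

lemma not_E_of_mem_X_s15 (hx : x ∈ D.X) (hz : z ∈ D.X) : ¬ D.E x z := fun h => by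
  rcases D.mem_of_edge x z h with ⟨-, h⟩ | ⟨h, -⟩
  exacts [notMem_Y_of_mem_X hz h, notMem_Y_of_mem_X hx h]

lemma not_E_of_mem_Y (hx : x ∈ D.Y) (hz : z ∈ D.Y) : ¬ D.E x z := fun h => by
  rcases D.mem_of_edge x z h with ⟨h, -⟩ | ⟨-, h⟩
  exacts [notMem_X_of_mem_Y hx h, notMem_X_of_mem_Y hz h]

lemma Nplus_subset_Y (hx : x ∈ D.X) : D.Nplus x ⊆ D.Y := fun w hw => by
  rcases D.mem_of_edge x w hw with ⟨-, h⟩ | ⟨h, -⟩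
  exacts [h, absurd hx (notMem_X_of_mem_Y h)]

lemma Nminus_subset_Y (hx : x ∈ D.X) : D.Nminus x ⊆ D.Y := fun w hw => by
  rcases D.mem_of_edge w x hw with ⟨-, h⟩ | ⟨h, -⟩
  exacts [absurd h (notMem_Y_of_mem_X hx), h]

lemma IsAuto.Nplus_apply {α : Equiv.Perm V} (hα : D.IsAuto α) (x : V) :
    D.Nplus (α x) = α '' D.Nplus x := by
  ext w
  rw [← α.apply_symm_apply w, Set.mem_image_equiv, Equiv.symm_apply_apply]
  exact (hα.2.2 x (α.symm w)).symm

namespace Homogeneous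

lemma exists_isAuto_eqOn_of_subset_X (hhom : D.Homogeneous) {A : Set V} {φ : V → V}
    (hA : A.Finite) (hAX : A ⊆ D.X) (hφ : Set.MapsTo φ A D.X) (hinj : Set.InjOn φ A) :
    ∃ α : Equiv.Perm V, D.IsAuto α ∧ Set.EqOn α φ A :=
  hhom A hA φ ⟨hinj, fun _ ha => iff_of_true (hAX ha) (hφ ha),
    fun _ ha => iff_of_false (notMem_Y_of_mem_X (hAX ha)) (notMem_Y_of_mem_X (hφ ha)),
    fun _ ha _ hb => iff_of_false (not_E_of_mem_X_s15 (hAX ha) (hAX hb))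
      (not_E_of_mem_X_s15 (hφ ha) (hφ hb))⟩

lemma exists_isAuto_eqOn_of_subset_Y (hhom : D.Homogeneous) {A : Set V} {φ : V → V}
    (hA : A.Finite) (hAY : A ⊆ D.Y) (hφ : Set.MapsTo φ A D.Y) (hinj : Set.InjOn φ A) :
    ∃ α : Equiv.Perm V, D.IsAuto α ∧ Set.EqOn α φ A :=
  hhom A hA φ ⟨hinj,
    fun _ ha => iff_of_false (notMem_X_of_mem_Y (hAY ha)) (notMem_X_of_mem_Y (hφ ha)),
    fun _ ha => iff_of_true (hAY ha) (hφ ha),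
    fun _ ha _ hb => iff_of_false (not_E_of_mem_Y (hAY ha) (hAY hb))
      (not_E_of_mem_Y (hφ ha) (hφ hb))⟩

lemma exists_isAuto_apply_eq (hhom : D.Homogeneous) (hx : x ∈ D.X) (hz : z ∈ D.X) :
    ∃ α : Equiv.Perm V, D.IsAuto α ∧ α x = z := by
  obtain ⟨α, hα, hαx⟩ := hhom.exists_isAuto_eqOn_of_subset_X (φ := fun _ => z)
    (Set.finite_singleton x) (Set.singleton_subset_iff.mpr hx) (fun _ _ => hz)
    (Set.injOn_singleton _ x)
  exact ⟨α, hα, hαx rfl⟩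

lemma exists_isAuto_apply_eq_apply_eq (hhom : D.Homogeneous) (hx₁ : x₁ ∈ D.X)
    (hx₂ : x₂ ∈ D.X) (hz₁ : z₁ ∈ D.X) (hz₂ : z₂ ∈ D.X) (hx : x₁ ≠ x₂) (hz : z₁ ≠ z₂) :
    ∃ α : Equiv.Perm V, D.IsAuto α ∧ α x₁ = z₁ ∧ α x₂ = z₂ := by
  classical
  obtain ⟨α, hα, hαx⟩ := hhom.exists_isAuto_eqOn_of_subset_X
    (φ := fun v => if v = x₁ then z₁ else z₂) (Set.toFinite {x₁, x₂})
    (Set.pair_subset hx₁ hx₂) (fun v _ => by beta_reduce; split_ifs <;> assumption)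
    (by simp [hx.symm, hz])
  exact ⟨α, hα, by simpa using hαx (Set.mem_insert x₁ {x₂}),
    by simpa [hx.symm] using hαx (Set.mem_insert_of_mem x₁ rfl)⟩

lemma ncard_Nplus_eq (hhom : D.Homogeneous) (hx : x ∈ D.X) (hz : z ∈ D.X) :
    (D.Nplus x).ncard = (D.Nplus z).ncard := by
  obtain ⟨α, hα, rfl⟩ := hhom.exists_isAuto_apply_eq hx hz
  rw [hα.Nplus_apply, Set.ncard_image_of_injective _ α.injective]

lemma ncard_inter_Nplus_eq (hhom : D.Homogeneous) (hx₁ : x₁ ∈ D.X) (hx₂ : x₂ ∈ D.X)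
    (hz₁ : z₁ ∈ D.X) (hz₂ : z₂ ∈ D.X) (hx : x₁ ≠ x₂) (hz : z₁ ≠ z₂) :
    (D.Nplus x₁ ∩ D.Nplus x₂).ncard = (D.Nplus z₁ ∩ D.Nplus z₂).ncard := by
  obtain ⟨α, hα, rfl, rfl⟩ := hhom.exists_isAuto_apply_eq_apply_eq hx₁ hx₂ hz₁ hz₂ hx hz
  rw [hα.Nplus_apply, hα.Nplus_apply, ← Set.image_inter α.injective,
    Set.ncard_image_of_injective _ α.injective]

lemma exists_Nplus_eq (hhom : D.Homogeneous) (hu : u ∈ D.X) (hfin : (D.Nplus u).Finite)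
    {T : Set V} (hTY : T ⊆ D.Y) (hT : T.encard = (D.Nplus u).encard) :
    ∃ x ∈ D.X, D.Nplus x = T := by
  have : Nonempty V := ⟨u⟩
  obtain ⟨f, hf⟩ := hfin.exists_bijOn_of_encard_eq hT.symm
  obtain ⟨α, hα, hαf⟩ := hhom.exists_isAuto_eqOn_of_subset_Y hfin (Nplus_subset_Y hu)
    (hf.mapsTo.mono_right hTY) hf.injOn
  exact ⟨α u, (hα.1 u).mp hu, by rw [hα.Nplus_apply, hαf.image_eq, hf.image_eq]⟩

lemma exists_E_of_not_bipartite (hhom : D.Homogeneous) (hnb : ¬ D.Bipartite)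
    (hx : x ∈ D.X) : ∃ y, D.E y x := by
  obtain ⟨a, b, hab, haX⟩ : ∃ a b, D.E a b ∧ a ∉ D.X := by
    simpa [Bipartite] using (not_or.mp hnb).1
  have hbX : b ∈ D.X := by
    rcases D.mem_of_edge a b hab with ⟨h, -⟩ | ⟨-, h⟩
    exacts [absurd h haX, h]
  obtain ⟨α, hα, rfl⟩ := hhom.exists_isAuto_apply_eq hbX hx
  exact ⟨α a, (hα.2.2 a b).mp hab⟩

-- The vertex `x` is the one with `N⁺(x) = A ∪ (N⁺(u) \ B)`.
lemma exists_inter_Nplus_eq_diff (hhom : D.Homogeneous) (hu : u ∈ D.X)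
    (hfin : (D.Nplus u).Finite) {A B : Set V} (hB : B ⊆ D.Nplus u) (hAY : A ⊆ D.Y)
    (hA : Disjoint A (D.Nplus u)) (hAB : A.encard = B.encard) :
    ∃ x ∈ D.X, D.Nplus u ∩ D.Nplus x = D.Nplus u \ B := by
  have hcard : (A ∪ (D.Nplus u \ B)).encard = (D.Nplus u).encard := by
    rw [Set.encard_union_eq (hA.mono_right Set.sdiff_subset), hAB, add_comm,
      Set.encard_sdiff_add_encard_of_subset hB]
  obtain ⟨x, hx, hxN⟩ := hhom.exists_Nplus_eq hu hfin
    (Set.union_subset hAY (Set.sdiff_subset.trans (Nplus_subset_Y hu))) hcard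
  refine ⟨x, hx, ?_⟩
  rw [hxN, Set.inter_union_distrib_left, hA.symm.inter_eq, Set.empty_union,
    Set.inter_eq_right.mpr Set.sdiff_subset]

lemma ncard_inter_Nplus_of_ne (hhom : D.Homogeneous) (hu : u ∈ D.X)
    (hfin : (D.Nplus u).Finite) (hne : (D.Nplus u).Nonempty) (hy : y ∈ D.Y)
    (hyu : y ∉ D.Nplus u) (hx₁ : x₁ ∈ D.X) (hx₂ : x₂ ∈ D.X) (hx : x₁ ≠ x₂) :
    (D.Nplus x₁ ∩ D.Nplus x₂).ncard = (D.Nplus u).ncard - 1 := by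
  obtain ⟨s, hs⟩ := hne
  obtain ⟨x, hx', hux⟩ := hhom.exists_inter_Nplus_eq_diff hu hfin
    (Set.singleton_subset_iff.mpr hs) (Set.singleton_subset_iff.mpr hy)
    (Set.disjoint_singleton_left.mpr hyu) (by simp)
  have hxu : u ≠ x := by
    rintro rfl
    simpa using hux.subset ⟨hs, hs⟩
  rw [hhom.ncard_inter_Nplus_eq hx₁ hx₂ hu hx' hx hxu, hux,
    Set.ncard_sdiff_singleton_of_mem hs]

lemma Y_eq_insert_Nplus (hhom : D.Homogeneous) (hu : u ∈ D.X) (hfin : (D.Nplus u).Finite)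
    (hn : 2 ≤ (D.Nplus u).ncard) (hy : y ∈ D.Y) (hyu : y ∉ D.Nplus u) :
    D.Y = insert y (D.Nplus u) := by
  refine (Set.insert_subset hy (Nplus_subset_Y hu)).antisymm' fun y' hy' => ?_
  by_contra hy'u
  rw [Set.mem_insert_iff, not_or] at hy'u
  obtain ⟨s₁, hs₁, s₂, hs₂, hs⟩ := (Set.one_lt_ncard hfin).mp hn
  have hB : {s₁, s₂} ⊆ D.Nplus u := Set.pair_subset hs₁ hs₂
  obtain ⟨x, hx, hux⟩ := hhom.exists_inter_Nplus_eq_diff hu hfin hB (Set.pair_subset hy' hy)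
    (Set.disjoint_left.mpr (by rintro a (rfl | rfl); exacts [hy'u.2, hyu]))
    (by rw [Set.encard_pair hy'u.1, Set.encard_pair hs])
  have hxu : u ≠ x := by
    rintro rfl
    simpa using hux.subset ⟨hs₁, hs₁⟩
  have h := hhom.ncard_inter_Nplus_of_ne hu hfin ⟨s₁, hs₁⟩ hy hyu hu hx hxu
  rw [hux, Set.ncard_sdiff hB (Set.toFinite _), Set.ncard_pair hs] at h
  omega

lemma injOn_Nplus (hhom : D.Homogeneous) (hu : u ∈ D.X) (hfin : (D.Nplus u).Finite)
    (hne : (D.Nplus u).Nonempty) (hy : y ∈ D.Y) (hyu : y ∉ D.Nplus u) :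
    Set.InjOn D.Nplus D.X := by
  intro x hx z hz hxz
  by_contra h
  have := hhom.ncard_inter_Nplus_of_ne hu hfin hne hy hyu hx hz h
  rw [hxz, Set.inter_self, hhom.ncard_Nplus_eq hz hu] at this
  have := (Set.ncard_pos hfin).mpr hne
  omega

end Homogeneous

lemma exists_Nplus_eq_diff_singleton (hx : x ∈ D.X) (hYfin : D.Y.Finite)
    (hY : (D.Nplus x).ncard + 1 = D.Y.ncard) : ∃ y ∈ D.Y, D.Nplus x = D.Y \ {y} := by
  obtain ⟨y, hyx, hins⟩ := (Set.exists_eq_insert_iff_ncard (hYfin.subset (Nplus_subset_Y hx))).mpr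
    ⟨Nplus_subset_Y hx, hY⟩
  exact ⟨y, hins ▸ Set.mem_insert y _, by rw [← hins, Set.insert_sdiff_self_of_notMem hyx]⟩

lemma bijOn_of_Nplus_eq_diff_singleton {m : V → V} (hmY : Set.MapsTo m D.X D.Y)
    (hm : ∀ x ∈ D.X, D.Nplus x = D.Y \ {m x}) (hinj : Set.InjOn D.Nplus D.X)
    (hsurj : ∀ y ∈ D.Y, ∃ x ∈ D.X, D.Nplus x = D.Y \ {y}) : Set.BijOn m D.X D.Y := by
  refine ⟨hmY, fun x hx z hz hxz => hinj hx hz (by rw [hm x hx, hm z hz, hxz]), fun y hy => ?_⟩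
  obtain ⟨x, hx, hxy⟩ := hsurj y hy
  refine ⟨x, hx, by_contra fun h => ?_⟩
  have : m x ∉ D.Nplus x := by simp [hm x hx]
  exact this (hxy ▸ ⟨hmY hx, h⟩)

lemma isM_of_Nplus_eq_diff_singleton {m : V → V} (hm : Set.BijOn m D.X D.Y)
    (hN : ∀ x ∈ D.X, D.Nplus x = D.Y \ {m x}) (hpred : ∀ x ∈ D.X, ∃ y, D.E y x) : D.IsM := by
  refine ⟨m, hm, Or.inr fun x hx y hy => ⟨⟨fun hyx => by_contra fun h => ?_, ?_⟩, ?_⟩⟩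
  · exact D.not_opposite y x hyx (show y ∈ D.Nplus x by rw [hN x hx]; exact ⟨hy, h⟩)
  · rintro rfl
    obtain ⟨y, hyx⟩ := hpred x hx
    have : y ∈ D.Y \ D.Nplus x := ⟨Nminus_subset_Y hx hyx, D.not_opposite y x hyx⟩
    rw [hN x hx, Set.sdiff_sdiff_cancel_left (Set.singleton_subset_iff.mpr (hm.mapsTo hx)),
      Set.mem_singleton_iff] at this
    exact this ▸ hyx
  · change y ∈ D.Nplus x ↔ _
    rw [hN x hx]
    simp [hy]

end TwoPartiteDigraph

open TwoPartiteDigraph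

/-- If `D` is a homogeneous non-bipartite 2-partite digraph and some `u ∈ X` has
exactly `n` successors with `2 ≤ n` finite, then `|Y| = n + 1` and `D ≅ M_{n+1}`. -/
theorem stmt_15 {V : Type*} (D : TwoPartiteDigraph V) (hhom : D.Homogeneous)
    (hnb : ¬ D.Bipartite) (u : V) (hu : u ∈ D.X) (n : ℕ) (hn : 2 ≤ n)
    (hfin : (D.Nplus u).Finite) (hcard : (D.Nplus u).ncard = n) :
    D.Y.Finite ∧ D.Y.ncard = n + 1 ∧ D.IsM := by
  obtain ⟨y₀, hy₀⟩ := hhom.exists_E_of_not_bipartite hnb hu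
  have hy₀Y : y₀ ∈ D.Y := Nminus_subset_Y hu hy₀
  have hy₀u : y₀ ∉ D.Nplus u := D.not_opposite y₀ u hy₀
  have hne : (D.Nplus u).Nonempty := Set.nonempty_of_ncard_ne_zero (by omega)
  have hY := hhom.Y_eq_insert_Nplus hu hfin (hcard ▸ hn) hy₀Y hy₀u
  have hYfin : D.Y.Finite := hY ▸ hfin.insert y₀
  have hYcard : D.Y.ncard = n + 1 := by rw [hY, Set.ncard_insert_of_notMem hy₀u hfin, hcard]
  have hcodim (x) (hx : x ∈ D.X) : (D.Nplus x).ncard + 1 = D.Y.ncard := by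
    rw [hhom.ncard_Nplus_eq hx hu, hcard, hYcard]
  choose! m hmY hm using fun x hx => exists_Nplus_eq_diff_singleton hx hYfin (hcodim x hx)
  refine ⟨hYfin, hYcard, isM_of_Nplus_eq_diff_singleton ?_ hm
    fun x hx => hhom.exists_E_of_not_bipartite hnb hx⟩
  refine bijOn_of_Nplus_eq_diff_singleton hmY hm (hhom.injOn_Nplus hu hfin hne hy₀Y hy₀u)
    fun y hy => hhom.exists_Nplus_eq hu hfin Set.sdiff_subset ?_
  rw [← hfin.cast_ncard_eq, ← hYfin.sdiff.cast_ncard_eq,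
    Set.ncard_sdiff_singleton_of_mem hy, hYcard, hcard, Nat.add_sub_cancel]
end
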